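/- Let η : ℝ³ → ℝ³ be the axial rotation Killing field η(x) = (−x₂, x₁, 0), with squared norm λ(x) = x₁² + x₂², and let U = {x ∈ ℝ³ : x₁² + x₂² ≠ 0}. Let S : U → ℝ³ be a C¹ vector field satisfying: (i) ⟨S(x), η(x)⟩ = 0 for all x ∈ U; (ii) ∑_{a=1}^{3} ∂_a S_a(x) = 0 for all x ∈ U (S is divergence-free); (iii) the Lie bracket [η, S] vanishes, i.e. ∑_b η_b(x) ∂_b S_a(x) − ∑_b S_b(x) ∂_b η_a(x) = 0 for all x ∈ U and all a. Define Ψ(x)_{ab} = (1/λ(x)) (S_a(x) η_b(x) + S_b(x) η_a(x)). Then Ψ(x) is symmetric and trace-free for every x ∈ U, and Ψ is divergence-free with respect to the flat metric: ∑_{a=1}^{3} ∂_a Ψ_{ab}(x) = 0 for all x ∈ U and all b. -/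

import Mathlib

/-!
Write `D_v f` for the derivative of `f` at `x` in direction `v`. Column `b` of `Ψ` is the vector
field `λ⁻¹ • (η_b • S + S_b • η)`, and the product rule `div (f • V) = D_V f + f div V` gives
`div Ψ_{·b} = -λ⁻² (η_b D_S λ + S_b D_η λ) + λ⁻¹ (D_S η_b + η_b div S + D_η S_b + S_b div η)`.
Here `D_η λ = 0` and `div η = 0`; as `η` is linear, `D_S η = η(S)`, and `[η, S] = 0` says
`D_η S = D_S η`. So `div Ψ_{·b} = -λ⁻² η_b D_S λ + 2 λ⁻¹ η(S)_b`, which vanishes because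
orthogonality of `S` to `η` gives `(D_S λ) η = 2 λ η(S)`.
-/

/-- The axial rotation Killing field `η(x) = (−x₂, x₁, 0)` on `ℝ³`. -/
def axialEta (x : Fin 3 → ℝ) : Fin 3 → ℝ := ![-(x 1), x 0, 0]

/-- The squared norm `λ(x) = x₁² + x₂²` of the axial Killing field. -/
def axialLam (x : Fin 3 → ℝ) : ℝ := x 0 ^ 2 + x 1 ^ 2

/-- The complement of the symmetry axis: `U = {x ∈ ℝ³ : x₁² + x₂² ≠ 0}`. -/
def axialU : Set (Fin 3 → ℝ) := {x | x 0 ^ 2 + x 1 ^ 2 ≠ 0}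

/-- The axially symmetric tensor `Ψ_{ab} = (1/λ)(S_a η_b + S_b η_a)` built from a
source vector field `S`. -/
noncomputable def axialPsi (S : (Fin 3 → ℝ) → Fin 3 → ℝ) (x : Fin 3 → ℝ) :
    Matrix (Fin 3) (Fin 3) ℝ :=
  fun a b => (1 / axialLam x) * (S x a * axialEta x b + S x b * axialEta x a)

section Divergence

variable {ι : Type*} [Fintype ι] [DecidableEq ι]

theorem sum_mul_apply_single {R : Type*} [Semiring R] [TopologicalSpace R]
    (L : (ι → R) →L[R] R) (v : ι → R) :
    ∑ i, v i * L (Pi.single i 1) = L v := by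
  conv_rhs => rw [pi_eq_sum_univ' v]
  simp [map_sum]

noncomputable def divergence (V : (ι → ℝ) → ι → ℝ) (x : ι → ℝ) : ℝ :=
  ∑ i, fderiv ℝ (fun y => V y i) x (Pi.single i 1)

variable {V W : (ι → ℝ) → ι → ℝ} {x : ι → ℝ}

theorem divergence_add (hV : DifferentiableAt ℝ V x) (hW : DifferentiableAt ℝ W x) :
    divergence (fun y => V y + W y) x = divergence V x + divergence W x := by
  simp only [divergence, Pi.add_apply, ← Finset.sum_add_distrib]
  refine Finset.sum_congr rfl fun i _ => ?_
  rw [fderiv_fun_add (differentiableAt_pi.1 hV i) (differentiableAt_pi.1 hW i)]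
  rfl

theorem divergence_smul {f : (ι → ℝ) → ℝ} (hf : DifferentiableAt ℝ f x)
    (hV : DifferentiableAt ℝ V x) :
    divergence (fun y => f y • V y) x = fderiv ℝ f x (V x) + f x * divergence V x := by
  simp only [divergence, Pi.smul_apply, smul_eq_mul]
  rw [← sum_mul_apply_single (fderiv ℝ f x) (V x), Finset.mul_sum, ← Finset.sum_add_distrib]
  refine Finset.sum_congr rfl fun i _ => ?_
  rw [fderiv_fun_mul hf (differentiableAt_pi.1 hV i)]
  simp only [add_apply, smul_apply, smul_eq_mul]
  ring

end Divergence

theorem isOpen_axialU : IsOpen axialU :=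
  isOpen_ne_fun (by fun_prop) continuous_const

def axialEtaLinear : (Fin 3 → ℝ) →ₗ[ℝ] Fin 3 → ℝ where
  toFun := axialEta
  map_add' x y := by ext i; fin_cases i <;> simp [axialEta, add_comm]
  map_smul' c x := by ext i; fin_cases i <;> simp [axialEta]

theorem differentiable_axialEta : Differentiable ℝ axialEta :=
  (LinearMap.toContinuousLinearMap axialEtaLinear).differentiable

theorem fderiv_axialEta_apply (x v : Fin 3 → ℝ) (a : Fin 3) :
    fderiv ℝ (fun y => axialEta y a) x v = axialEta v a := by
  have h : HasFDerivAt axialEta (LinearMap.toContinuousLinearMap axialEtaLinear) x :=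
    (LinearMap.toContinuousLinearMap axialEtaLinear).hasFDerivAt
  rw [fderiv_apply h.differentiableAt, h.fderiv]
  rfl

theorem divergence_axialEta (x : Fin 3 → ℝ) : divergence axialEta x = 0 := by
  simp only [divergence, fderiv_axialEta_apply, Fin.sum_univ_three]
  simp [axialEta]

theorem fderiv_axialLam_apply (x v : Fin 3 → ℝ) :
    fderiv ℝ axialLam x v = 2 * (x 0 * v 0 + x 1 * v 1) := by
  unfold axialLam
  rw [fderiv_fun_add (by fun_prop) (by fun_prop), fderiv_fun_pow _ (by fun_prop),
    fderiv_fun_pow _ (by fun_prop)]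
  simp only [fderiv_apply, differentiableAt_fun_id, fderiv_fun_id, ContinuousLinearMap.comp_id,
    Nat.add_one_sub_one, pow_one, nsmul_eq_mul, Nat.cast_ofNat, add_apply, smul_apply,
    ContinuousLinearMap.proj_apply, smul_eq_mul]
  ring

theorem fderiv_axialLam_axialEta (x : Fin 3 → ℝ) : fderiv ℝ axialLam x (axialEta x) = 0 := by
  rw [fderiv_axialLam_apply]
  simp only [axialEta, Matrix.cons_val_zero, Matrix.cons_val_one]
  ring

theorem fderiv_axialLam_mul_axialEta {x s : Fin 3 → ℝ} (horth : ∑ a, s a * axialEta x a = 0)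
    (b : Fin 3) : fderiv ℝ axialLam x s * axialEta x b = 2 * axialLam x * axialEta s b := by
  simp only [Fin.sum_univ_three, axialEta, Matrix.cons_val_zero, Matrix.cons_val_one,
    Matrix.cons_val_two, Matrix.tail_cons, Matrix.head_cons, mul_zero, add_zero] at horth
  rw [fderiv_axialLam_apply, axialLam]
  fin_cases b
  · simp only [axialEta, Fin.zero_eta, Matrix.cons_val_zero]
    linear_combination (2 * x 0) * horth
  · simp only [axialEta, Fin.mk_one, Matrix.cons_val_one, Matrix.cons_val_zero]
    linear_combination (2 * x 1) * horth
  · simp [axialEta]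

theorem divergence_axialPsi_column {S : (Fin 3 → ℝ) → Fin 3 → ℝ} {x : Fin 3 → ℝ}
    (hx : x ∈ axialU) (hS : DifferentiableAt ℝ S x) (horth : ∑ a, S x a * axialEta x a = 0)
    (hdiv : divergence S x = 0)
    (hlie : ∀ a, fderiv ℝ (fun y => S y a) x (axialEta x) = axialEta (S x) a) (b : Fin 3) :
    divergence (fun y a => axialPsi S y a b) x = 0 := by
  have hlam : axialLam x ≠ 0 := hx
  have hcol : (fun y a => axialPsi S y a b) =
      fun y => (axialLam y)⁻¹ • (axialEta y b • S y + S y b • axialEta y) := by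
    funext y a
    simp only [axialPsi, Pi.add_apply, Pi.smul_apply, smul_eq_mul]
    ring
  have hinv : HasFDerivAt (fun y => (axialLam y)⁻¹)
      ((-(axialLam x ^ 2)⁻¹) • fderiv ℝ axialLam x) x :=
    (hasDerivAt_inv hlam).comp_hasFDerivAt x
      (by unfold axialLam; fun_prop : DifferentiableAt ℝ axialLam x).hasFDerivAt
  have hη := differentiable_axialEta x
  have hηb : DifferentiableAt ℝ (fun y => axialEta y b) x := differentiableAt_pi.1 hη b
  have hSb : DifferentiableAt ℝ (fun y => S y b) x := differentiableAt_pi.1 hS b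
  rw [hcol, divergence_smul hinv.differentiableAt (by fun_prop),
    divergence_add (by fun_prop) (by fun_prop),
    divergence_smul hηb hS, divergence_smul hSb hη, divergence_axialEta, hdiv, hinv.fderiv,
    fderiv_axialEta_apply, hlie]
  simp only [smul_apply, map_add, map_smul, fderiv_axialLam_axialEta, smul_eq_mul]
  field_simp
  linear_combination -fderiv_axialLam_mul_axialEta horth b

/-- If a `C¹` vector field `S` on `U` is orthogonal to the axial Killing field `η`,
divergence-free, and has vanishing Lie bracket with `η`, then the tensor
`Ψ_{ab} = (1/λ)(S_a η_b + S_b η_a)` is symmetric, trace-free and divergence-free with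
respect to the flat metric on `U`. -/
theorem axialPsi_symm_traceFree_divergenceFree
    (S : (Fin 3 → ℝ) → Fin 3 → ℝ) (hS : ContDiffOn ℝ 1 S axialU)
    (horth : ∀ x ∈ axialU, ∑ a : Fin 3, S x a * axialEta x a = 0)
    (hdiv : ∀ x ∈ axialU,
      ∑ a : Fin 3, fderiv ℝ (fun y => S y a) x (Pi.single a 1) = 0)
    (hlie : ∀ x ∈ axialU, ∀ a : Fin 3,
      (∑ b : Fin 3, axialEta x b * fderiv ℝ (fun y => S y a) x (Pi.single b 1)) -
        (∑ b : Fin 3, S x b * fderiv ℝ (fun y => axialEta y a) x (Pi.single b 1)) = 0) :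
    (∀ x ∈ axialU, ∀ a b : Fin 3, axialPsi S x a b = axialPsi S x b a) ∧
      (∀ x ∈ axialU, ∑ a : Fin 3, axialPsi S x a a = 0) ∧
      (∀ x ∈ axialU, ∀ b : Fin 3,
        ∑ a : Fin 3, fderiv ℝ (fun y => axialPsi S y a b) x (Pi.single a 1) = 0) := by
  refine ⟨fun x _ a b => by simp only [axialPsi, add_comm], fun x hx => ?_, fun x hx b => ?_⟩
  · simp only [axialPsi, ← two_mul, ← Finset.mul_sum, mul_left_comm _ (2 : ℝ), horth x hx,
      mul_zero]
  · have hSx : DifferentiableAt ℝ S x :=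
      (hS.differentiableOn one_ne_zero x hx).differentiableAt (isOpen_axialU.mem_nhds hx)
    refine divergence_axialPsi_column hx hSx (horth x hx) (hdiv x hx) (fun a => ?_) b
    have h := hlie x hx a
    rwa [sum_mul_apply_single, sum_mul_apply_single, fderiv_axialEta_apply, sub_eq_zero] at h
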